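/- Let R be a commutative ring and h₁, h₂ ∈ R a regular sequence (h₁ is a nonzerodivisor and h₂ is a nonzerodivisor on R/(h₁), with (h₁,h₂) ≠ R). Then inside the total ring of fractions (or assuming R is a domain, inside Frac(R)), R_{h₁} ∩ R_{h₂} = R, where R_h denotes the localization at the multiplicative set {1, h, h², ...}. -/
import Mathlib

private lemma reg_pow_aux {R : Type*} [CommRing R] [IsDomain R]
    (h₁ h₂ : R) (hh₁ : h₁ ≠ 0)
    (hreg : ∀ a : R, h₂ * a ∈ Ideal.span {h₁} → a ∈ Ideal.span {h₁}) :
    ∀ m a : R, ∀ k : ℕ, h₂ * a = h₁ ^ k * m → h₁ ^ k ∣ a := by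
  intro m a k
  induction k generalizing m a with
  | zero => intro _; simp
  | succ k ih =>
    intro h
    have h1 : h₂ * a ∈ Ideal.span {h₁} := by
      rw [Ideal.mem_span_singleton]
      exact ⟨h₁ ^ k * m, by rw [h]; ring⟩
    have := hreg a h1
    rw [Ideal.mem_span_singleton] at this
    obtain ⟨a', rfl⟩ := this
    have : h₁ * (h₂ * a') = h₁ * (h₁ ^ k * m) := by
      have : h₂ * (h₁ * a') = h₁ * (h₁ ^ k * m) := by rw [h]; ring
      linear_combination this
    have h2 : h₂ * a' = h₁ ^ k * m := mul_left_cancel₀ hh₁ this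
    obtain ⟨c, rfl⟩ := ih m a' h2
    exact ⟨c, by ring⟩

private lemma reg_pow_aux2 {R : Type*} [CommRing R] [IsDomain R]
    (h₁ h₂ : R) (hh₁ : h₁ ≠ 0)
    (hreg : ∀ a : R, h₂ * a ∈ Ideal.span {h₁} → a ∈ Ideal.span {h₁}) :
    ∀ n : ℕ, ∀ m a : R, ∀ k : ℕ, h₂ ^ n * a = h₁ ^ k * m → h₁ ^ k ∣ a := by
  intro n
  induction n with
  | zero => intro m a k h; exact ⟨m, by rw [← h]; ring⟩
  | succ n ih =>
    intro m a k h
    have h' : h₂ ^ n * (h₂ * a) = h₁ ^ k * m := by rw [← h]; ring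
    obtain ⟨c, hc⟩ := ih m (h₂ * a) k h'
    exact reg_pow_aux h₁ h₂ hh₁ hreg c a k hc

/-- Gluing along a regular sequence of length two: let `R` be a (Noetherian) domain and
`h₁, h₂ ∈ R` a regular sequence (`h₁ ≠ 0`, `h₂` a nonzerodivisor on `R/(h₁)`, and
`(h₁,h₂) ≠ R`).  Then, inside the fraction field of `R`, one has
`R_{h₁} ∩ R_{h₂} = R`: any element expressible both as `a/h₁^m` and as `b/h₂^n` with
`a, b ∈ R` lies in `R`. -/
theorem localization_intersection_of_regular_sequence
    {R : Type*} [CommRing R] [IsDomain R] [IsNoetherianRing R]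
    (h₁ h₂ : R) (hh₁ : h₁ ≠ 0)
    (hreg : ∀ a : R, h₂ * a ∈ Ideal.span {h₁} → a ∈ Ideal.span {h₁})
    (hproper : Ideal.span {h₁, h₂} ≠ (⊤ : Ideal R))
    (x : FractionRing R)
    (hx₁ : ∃ (a : R) (m : ℕ), x * algebraMap R (FractionRing R) (h₁ ^ m) =
      algebraMap R (FractionRing R) a)
    (hx₂ : ∃ (b : R) (n : ℕ), x * algebraMap R (FractionRing R) (h₂ ^ n) =
      algebraMap R (FractionRing R) b) :
    ∃ r : R, x = algebraMap R (FractionRing R) r := by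
  obtain ⟨a, m, ha⟩ := hx₁
  obtain ⟨b, n, hb⟩ := hx₂
  set f := algebraMap R (FractionRing R)
  have hinj : Function.Injective f := IsFractionRing.injective R (FractionRing R)
  -- h₂^n * a = h₁^m * b in R
  have key : h₂ ^ n * a = h₁ ^ m * b := by
    apply hinj
    rw [map_mul, map_mul, ← ha, ← hb]
    ring
  obtain ⟨r, hr⟩ := reg_pow_aux2 h₁ h₂ hh₁ hreg n b a m key
  refine ⟨r, ?_⟩
  have hpow : f (h₁ ^ m) ≠ 0 := by
    simp only [map_pow]
    exact pow_ne_zero _ (fun h => hh₁ (hinj (by rw [h, map_zero])))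
  have : x * f (h₁ ^ m) = f r * f (h₁ ^ m) := by
    rw [ha, hr, map_mul]; ring
  exact mul_right_cancel₀ hpow this
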